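/- Let Q ⊆ ℝ³ be a bounded open set and let μH² denote the 2-dimensional Hausdorff measure on ℝ³. Suppose there is a constant c₀ > 0 such that for every continuously differentiable w : ℝ³ → ℝ one has ∫_{∂Q} w² dμH² ≤ c₀·( ∫_Q ‖∇w‖² dx + ∫_Q w² dx ). Then for every ε > 0 and every continuously differentiable v : ℝ³ → ℝ, ε·∫_{ε•∂Q} v² dμH² ≤ c₀·( ε²·∫_{ε•Q} ‖∇v‖² dx + ∫_{ε•Q} v² dx ), where ε•S := {ε·x : x ∈ S}, ∂Q is the topological boundary of Q, volume integrals are with respect to Lebesgue measure, and ∇v is the gradient of v. -/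

import Mathlib

/-!
Apply the trace inequality on `Q` to `w x = v (ε • x)`. Under `x ↦ ε • x` the measure `μH[2]`
scales by `ε ^ 2`, Lebesgue measure by `ε ^ 3`, and `∇w = ε • (∇v) (ε • ·)`; multiplying the
resulting inequality by `ε ^ 3` gives the claim.
-/

open MeasureTheory
open scoped Pointwise
open scoped MeasureTheory ENNReal
open Set

theorem MeasureTheory.Measure.map_smul_hausdorffMeasure {𝕜 E : Type*} [NormedField 𝕜]
    [NormedAddCommGroup E] [NormedSpace 𝕜 E] [MeasurableSpace E] [BorelSpace E] {d : ℝ}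
    (hd : 0 ≤ d) {c : 𝕜} (hc : c ≠ 0) :
    Measure.map (c • ·) (μH[d] : Measure E) = ‖c‖₊⁻¹ ^ d • μH[d] := by
  have h : ⇑(AffineMap.homothety (0 : E) c) = (c • ·) := by
    ext x
    simp [AffineMap.homothety_apply]
  rw [← h, map_homothety_hausdorffMeasure hd 0 hc]

theorem MeasureTheory.setIntegral_comp_smul_hausdorffMeasure {E F : Type*} [NormedAddCommGroup E]
    [NormedSpace ℝ E] [MeasurableSpace E] [BorelSpace E] [NormedAddCommGroup F] [NormedSpace ℝ F]
    {d : ℝ} (hd : 0 ≤ d) (f : E → F) (s : Set E) {R : ℝ} (hR : 0 < R) :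
    ∫ x in s, f (R • x) ∂μH[d] = (R ^ d)⁻¹ • ∫ x in R • s, f x ∂μH[d] := by
  let e : E ≃ᵐ E := (Homeomorph.smul (Units.mk0 R hR.ne')).toMeasurableEquiv
  have hs : e.symm ⁻¹' s = R • s := by
    ext y
    rw [mem_smul_set_iff_inv_smul_mem₀ hR.ne']
    rfl
  calc ∫ x in s, f (R • x) ∂μH[d]
      = ∫ x in e ⁻¹' (e.symm ⁻¹' s), f (e x) ∂μH[d] := by
        simp only [← preimage_comp, MeasurableEquiv.symm_comp_self, preimage_id_eq, id_eq]
        rfl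
    _ = ∫ y in e.symm ⁻¹' s, f y ∂(Measure.map (R • ·) μH[d]) :=
        (setIntegral_map_equiv _ _ _).symm
    _ = (R ^ d)⁻¹ • ∫ x in R • s, f x ∂μH[d] := by
        rw [Measure.map_smul_hausdorffMeasure hd hR.ne', Measure.restrict_smul,
          integral_smul_nnreal_measure, hs, NNReal.smul_def]
        simp [NNReal.coe_rpow, abs_of_pos hR, Real.inv_rpow hR.le]

theorem gradient_comp_smul {E : Type*} [NormedAddCommGroup E] [InnerProductSpace ℝ E]
    [CompleteSpace E] (v : E → ℝ) (c : ℝ) (x : E) :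
    gradient (v <| c • ·) x = c • gradient v (c • x) := by
  simp [gradient, fderiv_comp_smul]

theorem stmt_7_general (Q : Set (EuclideanSpace ℝ (Fin 3))) (c₀ : ℝ)
    (htrace : ∀ w : EuclideanSpace ℝ (Fin 3) → ℝ, ContDiff ℝ 1 w →
      ∫ x in frontier Q, (w x) ^ 2 ∂(μH[2]) ≤
        c₀ * ((∫ x in Q, ‖gradient w x‖ ^ 2) + ∫ x in Q, (w x) ^ 2)) :
    ∀ ε : ℝ, 0 < ε → ∀ v : EuclideanSpace ℝ (Fin 3) → ℝ, ContDiff ℝ 1 v →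
      ε * ∫ x in ε • frontier Q, (v x) ^ 2 ∂(μH[2]) ≤
        c₀ * (ε ^ 2 * (∫ x in ε • Q, ‖gradient v x‖ ^ 2) +
          ∫ x in ε • Q, (v x) ^ 2) := by
  intro ε hε v hv
  have hdim : Module.finrank ℝ (EuclideanSpace ℝ (Fin 3)) = 3 := finrank_euclideanSpace_fin
  have hboundary : ∫ x in frontier Q, v (ε • x) ^ 2 ∂μH[2] =
      (ε ^ 2)⁻¹ * ∫ x in ε • frontier Q, v x ^ 2 ∂μH[2] := by
    rw [setIntegral_comp_smul_hausdorffMeasure zero_le_two (v · ^ 2) (frontier Q) hε,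
      Real.rpow_two, smul_eq_mul]
  have hgradient : ∫ x in Q, ‖gradient (v <| ε • ·) x‖ ^ 2 =
      ε ^ 2 * ((ε ^ 3)⁻¹ * ∫ x in ε • Q, ‖gradient v x‖ ^ 2) := by
    have hpoint (x : EuclideanSpace ℝ (Fin 3)) :
        ‖gradient (v <| ε • ·) x‖ ^ 2 = ε ^ 2 * ‖gradient v (ε • x)‖ ^ 2 := by
      rw [gradient_comp_smul, norm_smul, mul_pow, Real.norm_eq_abs, sq_abs]
    rw [integral_congr_ae (ae_of_all _ hpoint), integral_const_mul,
      Measure.setIntegral_comp_smul_of_pos _ (‖gradient v ·‖ ^ 2) Q hε, hdim, smul_eq_mul]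
  have hvalue : ∫ x in Q, v (ε • x) ^ 2 = (ε ^ 3)⁻¹ * ∫ x in ε • Q, v x ^ 2 := by
    rw [Measure.setIntegral_comp_smul_of_pos _ (v · ^ 2) Q hε, hdim, smul_eq_mul]
  have h := htrace (v <| ε • ·) (hv.comp (contDiff_const_smul ε))
  rw [hboundary, hgradient, hvalue] at h
  generalize ∫ x in ε • frontier Q, v x ^ 2 ∂μH[2] = A at h ⊢
  generalize ∫ x in ε • Q, ‖gradient v x‖ ^ 2 = B at h ⊢
  generalize ∫ x in ε • Q, v x ^ 2 = C at h ⊢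
  calc ε * A = ε ^ 3 * ((ε ^ 2)⁻¹ * A) := by field_simp
    _ ≤ ε ^ 3 * (c₀ * (ε ^ 2 * ((ε ^ 3)⁻¹ * B) + (ε ^ 3)⁻¹ * C)) := by gcongr
    _ = c₀ * (ε ^ 2 * B + C) := by field_simp

/-- First inequality (3.4): if the trace inequality
`∫_{∂Q} w² dμH² ≤ c₀ (∫_Q ‖∇w‖² + ∫_Q w²)` holds on the bounded open reference
domain `Q`, then on the scaled domain `ε•Q` one has
`ε ∫_{ε•∂Q} v² dμH² ≤ c₀ (ε² ∫_{ε•Q} ‖∇v‖² + ∫_{ε•Q} v²)`. -/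
theorem stmt_7 (Q : Set (EuclideanSpace ℝ (Fin 3))) (hQb : Bornology.IsBounded Q)
    (hQo : IsOpen Q) (c₀ : ℝ) (hc₀ : 0 < c₀)
    (htrace : ∀ w : EuclideanSpace ℝ (Fin 3) → ℝ, ContDiff ℝ 1 w →
      ∫ x in frontier Q, (w x) ^ 2 ∂(μH[2]) ≤
        c₀ * ((∫ x in Q, ‖gradient w x‖ ^ 2) + ∫ x in Q, (w x) ^ 2)) :
    ∀ ε : ℝ, 0 < ε → ∀ v : EuclideanSpace ℝ (Fin 3) → ℝ, ContDiff ℝ 1 v →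
      ε * ∫ x in ε • frontier Q, (v x) ^ 2 ∂(μH[2]) ≤
        c₀ * (ε ^ 2 * (∫ x in ε • Q, ‖gradient v x‖ ^ 2) +
          ∫ x in ε • Q, (v x) ^ 2) :=
  stmt_7_general Q c₀ htrace
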